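/- In the two-block SBP setting, for all u, v ∈ ℝ^N one has uᵀ H̄ E v = −c Σ_{k∈{w,e}} [ (e_k⁺ (Pu)⁺)ᵀ H_k⁺ (e_k⁺ (Pv)⁺) + (e_k⁻ (Pu)⁻)ᵀ H_k⁻ (e_k⁻ (Pv)⁻) ]. Consequently E is self-adjoint with respect to H̄, i.e. H̄ E = Eᵀ H̄; and if moreover c ≥ 0 and H_k⁺, H_k⁻ are positive semidefinite for k ∈ {w,e}, then (u, E u)_{H̄} ≤ 0 for every u ∈ ℝ^N. -/

import Mathlib

open Matrix

/-!
`P` is the `H̄`-orthogonal projection onto the kernel of the interface constraint `L`, so `H̄ P` is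
symmetric. Since `H̄ SAT_BC2 = -S` with `S` the symmetric block-diagonal matrix of west/east
boundary terms, `H̄ E = -c Pᵀ S P`. This gives the bilinear identity and the self-adjointness; when
`c ≥ 0` and the boundary quadratures are positive semidefinite, so is `S`, hence so is `Pᵀ S P`.
-/

namespace Matrix

variable {m n R : Type*} [Fintype m] [Fintype n]

section Semiring

variable [Semiring R]

lemma dotProduct_fromBlocks_zero_zero_mulVec (A : Matrix n n R) (B : Matrix m m R)
    (x y : n ⊕ m → R) :
    x ⬝ᵥ fromBlocks A 0 0 B *ᵥ y =
      (x ∘ Sum.inl) ⬝ᵥ A *ᵥ (y ∘ Sum.inl) + (x ∘ Sum.inr) ⬝ᵥ B *ᵥ (y ∘ Sum.inr) := by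
  conv_lhs => rw [← Sum.elim_comp_inl_inr x, ← Sum.elim_comp_inl_inr y]
  rw [fromBlocks_mulVec, sumElim_dotProduct_sumElim]
  simp only [zero_mulVec, add_zero, zero_add, Sum.elim_comp_inl_inr]

end Semiring

section CommSemiring

variable [CommSemiring R]

lemma dotProduct_transpose_mul_mul_mulVec (A : Matrix m n R) (B : Matrix m m R) (x y : n → R) :
    x ⬝ᵥ (Aᵀ * B * A) *ᵥ y = (A *ᵥ x) ⬝ᵥ B *ᵥ (A *ᵥ y) := by
  rw [Matrix.mul_assoc, ← mulVec_mulVec, ← mulVec_mulVec, dotProduct_mulVec, vecMul_transpose]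

omit [Fintype n] in
lemma IsSymm.transpose_mul_mul {B : Matrix m m R} (hB : B.IsSymm) (A : Matrix m n R) :
    (Aᵀ * B * A).IsSymm := by
  rw [IsSymm, transpose_mul, transpose_mul, transpose_transpose, hB.eq, Matrix.mul_assoc]

omit [Fintype m] in
lemma IsSymm.mul_eq_transpose_mul {H X : Matrix n n R} (hH : H.IsSymm) (hHX : (H * X).IsSymm) :
    H * X = Xᵀ * H := by
  rw [← hHX.eq, transpose_mul, hH.eq]

end CommSemiring

section CommRing

variable [DecidableEq m] [DecidableEq n] [CommRing R]

/-- The projection onto `ker L` that is orthogonal for `(u, v) ↦ uᵀ H v`. -/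
noncomputable def constraintProjection (H : Matrix n n R) (L : Matrix m n R) : Matrix n n R :=
  1 - H⁻¹ * Lᵀ * (L * H⁻¹ * Lᵀ)⁻¹ * L

lemma mul_constraintProjection {H : Matrix n n R} (hH : IsUnit H.det) (L : Matrix m n R) :
    H * constraintProjection H L = H - Lᵀ * (L * H⁻¹ * Lᵀ)⁻¹ * L := by
  rw [constraintProjection, Matrix.mul_sub, Matrix.mul_one]
  simp only [← Matrix.mul_assoc, mul_nonsing_inv _ hH, Matrix.one_mul]

lemma IsSymm.mul_constraintProjection {H : Matrix n n R} (hHs : H.IsSymm) (hH : IsUnit H.det)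
    (L : Matrix m n R) : (H * constraintProjection H L).IsSymm := by
  rw [Matrix.mul_constraintProjection hH]
  exact hHs.sub ((hHs.inv.transpose_mul_mul Lᵀ).inv.transpose_mul_mul L)

end CommRing

namespace PosSemidef

variable [CommRing R] [PartialOrder R] [StarRing R]

lemma fromBlocks_zero_zero [AddLeftMono R] {A : Matrix n n R} {B : Matrix m m R}
    (hA : A.PosSemidef) (hB : B.PosSemidef) : (fromBlocks A 0 0 B).PosSemidef := by
  refine .of_dotProduct_mulVec_nonneg
    (hA.isHermitian.fromBlocks conjTranspose_zero hB.isHermitian) fun x => ?_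
  rw [dotProduct_fromBlocks_zero_zero_mulVec]
  exact add_nonneg (hA.dotProduct_mulVec_nonneg _) (hB.dotProduct_mulVec_nonneg _)

variable [TrivialStar R]

lemma transpose_mul_mul_same {A : Matrix m m R} (hA : A.PosSemidef) (B : Matrix m n R) :
    (Bᵀ * A * B).PosSemidef := by
  simpa only [conjTranspose_eq_transpose_of_trivial] using hA.conjTranspose_mul_mul_same B

lemma dotProduct_mulVec_self_nonneg {A : Matrix n n R} (hA : A.PosSemidef) (x : n → R) :
    0 ≤ x ⬝ᵥ A *ᵥ x := by
  simpa only [star_trivial] using hA.dotProduct_mulVec_nonneg x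

end PosSemidef

end Matrix

theorem twoBlock_E_selfAdjoint_negSemidef_general
    {Np Nm : ℕ}
    {mwp mep msp mnp mwm mem : ℕ}
    (Hp : Matrix (Fin Np) (Fin Np) ℝ)
    (Hm : Matrix (Fin Nm) (Fin Nm) ℝ)
    (hHp : Hp.PosDef) (hHm : Hm.PosDef)
    (ewp : Matrix (Fin mwp) (Fin Np) ℝ) (Hwp : Matrix (Fin mwp) (Fin mwp) ℝ)
    (eep : Matrix (Fin mep) (Fin Np) ℝ) (Hep : Matrix (Fin mep) (Fin mep) ℝ)
    (ewm : Matrix (Fin mwm) (Fin Nm) ℝ) (Hwm : Matrix (Fin mwm) (Fin mwm) ℝ)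
    (eem : Matrix (Fin mem) (Fin Nm) ℝ) (Hem : Matrix (Fin mem) (Fin mem) ℝ)
    (hHwp : Hwp.IsSymm) (hHep : Hep.IsSymm)
    (hHwm : Hwm.IsSymm) (hHem : Hem.IsSymm)
    (c : ℝ)
    (Hbar : Matrix (Fin Np ⊕ Fin Nm) (Fin Np ⊕ Fin Nm) ℝ)
    (hHbar : Hbar = fromBlocks Hp 0 0 Hm)
    (L : Matrix (Fin mnp ⊕ Fin msp) (Fin Np ⊕ Fin Nm) ℝ)
    (P : Matrix (Fin Np ⊕ Fin Nm) (Fin Np ⊕ Fin Nm) ℝ)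
    (hP : P = 1 - Hbar⁻¹ * Lᵀ * (L * Hbar⁻¹ * Lᵀ)⁻¹ * L)
    (SATBC2 : Matrix (Fin Np ⊕ Fin Nm) (Fin Np ⊕ Fin Nm) ℝ)
    (hSATBC2 : SATBC2 = -(Hbar⁻¹ *
      (fromBlocks (ewpᵀ * Hwp * ewp) 0 0 (ewmᵀ * Hwm * ewm)
        + fromBlocks (eepᵀ * Hep * eep) 0 0 (eemᵀ * Hem * eem))))
    (E : Matrix (Fin Np ⊕ Fin Nm) (Fin Np ⊕ Fin Nm) ℝ)
    (hE : E = c • (P * SATBC2 * P))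
    :
    (∀ u v : Fin Np ⊕ Fin Nm → ℝ,
      u ⬝ᵥ (Hbar * E) *ᵥ v =
        -c *
          ((ewp *ᵥ ((P *ᵥ u) ∘ Sum.inl)) ⬝ᵥ Hwp *ᵥ (ewp *ᵥ ((P *ᵥ v) ∘ Sum.inl))
          + (eep *ᵥ ((P *ᵥ u) ∘ Sum.inl)) ⬝ᵥ Hep *ᵥ (eep *ᵥ ((P *ᵥ v) ∘ Sum.inl))
          + (ewm *ᵥ ((P *ᵥ u) ∘ Sum.inr)) ⬝ᵥ Hwm *ᵥ (ewm *ᵥ ((P *ᵥ v) ∘ Sum.inr))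
          + (eem *ᵥ ((P *ᵥ u) ∘ Sum.inr)) ⬝ᵥ Hem *ᵥ (eem *ᵥ ((P *ᵥ v) ∘ Sum.inr)))) ∧
    Hbar * E = Eᵀ * Hbar ∧
    (0 ≤ c → Hwp.PosSemidef → Hep.PosSemidef → Hwm.PosSemidef → Hem.PosSemidef →
      ∀ u : Fin Np ⊕ Fin Nm → ℝ, u ⬝ᵥ Hbar *ᵥ (E *ᵥ u) ≤ 0) := by
  have hHbarS : Hbar.IsSymm := hHbar ▸
    (isHermitian_iff_isSymm.mp hHp.isHermitian).fromBlocks transpose_zero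
      (isHermitian_iff_isSymm.mp hHm.isHermitian)
  have hHbarU : IsUnit Hbar.det := (isUnit_iff_isUnit_det _).mp <|
    hHbar ▸ isUnit_fromBlocks_zero₂₁.mpr ⟨hHp.isUnit, hHm.isUnit⟩
  set S := fromBlocks (ewpᵀ * Hwp * ewp) 0 0 (ewmᵀ * Hwm * ewm)
    + fromBlocks (eepᵀ * Hep * eep) 0 0 (eemᵀ * Hem * eem)
  have hHP : Hbar * P = Pᵀ * Hbar :=
    hHbarS.mul_eq_transpose_mul (hP ▸ hHbarS.mul_constraintProjection hHbarU L)
  have hHE : Hbar * E = (-c) • (Pᵀ * S * P) := by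
    have hHSAT : Hbar * SATBC2 = -S := by
      rw [hSATBC2, Matrix.mul_neg, mul_nonsing_inv_cancel_left _ _ hHbarU]
    rw [hE, Matrix.mul_smul, ← Matrix.mul_assoc, ← Matrix.mul_assoc, hHP,
      Matrix.mul_assoc Pᵀ, hHSAT, Matrix.mul_neg, Matrix.neg_mul, smul_neg, neg_smul]
  have hS : S.IsSymm :=
    ((hHwp.transpose_mul_mul ewp).fromBlocks transpose_zero (hHwm.transpose_mul_mul ewm)).add
      ((hHep.transpose_mul_mul eep).fromBlocks transpose_zero (hHem.transpose_mul_mul eem))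
  refine ⟨fun u v => ?_, hHbarS.mul_eq_transpose_mul (hHE ▸ (hS.transpose_mul_mul P).smul (-c)),
    fun hc hwp hep hwm hem u => ?_⟩
  · rw [hHE, smul_mulVec, dotProduct_smul, dotProduct_transpose_mul_mul_mulVec, add_mulVec,
      dotProduct_add, dotProduct_fromBlocks_zero_zero_mulVec,
      dotProduct_fromBlocks_zero_zero_mulVec, dotProduct_transpose_mul_mul_mulVec,
      dotProduct_transpose_mul_mul_mulVec, dotProduct_transpose_mul_mul_mulVec,
      dotProduct_transpose_mul_mul_mulVec, smul_eq_mul]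
    ring
  · have hSpsd : S.PosSemidef :=
      ((hwp.transpose_mul_mul_same ewp).fromBlocks_zero_zero (hwm.transpose_mul_mul_same ewm)).add
        ((hep.transpose_mul_mul_same eep).fromBlocks_zero_zero (hem.transpose_mul_mul_same eem))
    rw [mulVec_mulVec, hHE, smul_mulVec, dotProduct_smul, smul_eq_mul]
    exact mul_nonpos_of_nonpos_of_nonneg (neg_nonpos.mpr hc)
      ((hSpsd.transpose_mul_mul_same P).dotProduct_mulVec_self_nonneg u)

/-- In the two-block SBP setting, the quadratic form of E with respect to H̄ is a
negative sum of boundary terms; E is self-adjoint with respect to H̄, and if c ≥ 0 and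
the west/east boundary quadratures are positive semidefinite, then (u, E u)_H̄ ≤ 0. -/
theorem twoBlock_E_selfAdjoint_negSemidef
    {Np Nm : ℕ} (hNp : 0 < Np) (hNm : 0 < Nm)
    {mwp mep msp mnp mwm mem msm : ℕ}
    (hmwp : 0 < mwp) (hmep : 0 < mep) (hmsp : 0 < msp) (hmnp : 0 < mnp)
    (hmwm : 0 < mwm) (hmem : 0 < mem) (hmsm : 0 < msm)
    (Hp DLp Dxp Dyp Rp : Matrix (Fin Np) (Fin Np) ℝ)
    (Hm DLm Dxm Dym Rm : Matrix (Fin Nm) (Fin Nm) ℝ)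
    (hHp : Hp.PosDef) (hHm : Hm.PosDef) (hRp : Rp.IsSymm) (hRm : Rm.IsSymm)
    (ewp dwp : Matrix (Fin mwp) (Fin Np) ℝ) (Hwp : Matrix (Fin mwp) (Fin mwp) ℝ)
    (eep dep : Matrix (Fin mep) (Fin Np) ℝ) (Hep : Matrix (Fin mep) (Fin mep) ℝ)
    (esp dsp : Matrix (Fin msp) (Fin Np) ℝ) (Hsp : Matrix (Fin msp) (Fin msp) ℝ)
    (enp dnp : Matrix (Fin mnp) (Fin Np) ℝ) (Hnp : Matrix (Fin mnp) (Fin mnp) ℝ)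
    (ewm dwm : Matrix (Fin mwm) (Fin Nm) ℝ) (Hwm : Matrix (Fin mwm) (Fin mwm) ℝ)
    (eem dem : Matrix (Fin mem) (Fin Nm) ℝ) (Hem : Matrix (Fin mem) (Fin mem) ℝ)
    (esm dsm : Matrix (Fin msm) (Fin Nm) ℝ) (Hsm : Matrix (Fin msm) (Fin msm) ℝ)
    -- interface matching: m_n⁻ = m_s⁺ (same row dimension) and H_n⁻ = H_s⁺
    (enm dnm : Matrix (Fin msp) (Fin Nm) ℝ) (Hnm : Matrix (Fin msp) (Fin msp) ℝ)
    (hHwp : Hwp.IsSymm) (hHep : Hep.IsSymm) (hHsp : Hsp.IsSymm) (hHnp : Hnp.IsSymm)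
    (hHwm : Hwm.IsSymm) (hHem : Hem.IsSymm) (hHsm : Hsm.IsSymm) (hHnm : Hnm.IsSymm)
    (hmatch : Hsp = Hnm)
    (hSBPp : ∀ u v : Fin Np → ℝ,
      u ⬝ᵥ (Hp * DLp) *ᵥ v =
        -((Dxp *ᵥ u) ⬝ᵥ Hp *ᵥ (Dxp *ᵥ v)) - ((Dyp *ᵥ u) ⬝ᵥ Hp *ᵥ (Dyp *ᵥ v))
        - u ⬝ᵥ Rp *ᵥ v
        + (ewp *ᵥ u) ⬝ᵥ Hwp *ᵥ (dwp *ᵥ v) + (eep *ᵥ u) ⬝ᵥ Hep *ᵥ (dep *ᵥ v)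
        + (esp *ᵥ u) ⬝ᵥ Hsp *ᵥ (dsp *ᵥ v) + (enp *ᵥ u) ⬝ᵥ Hnp *ᵥ (dnp *ᵥ v))
    (hSBPm : ∀ u v : Fin Nm → ℝ,
      u ⬝ᵥ (Hm * DLm) *ᵥ v =
        -((Dxm *ᵥ u) ⬝ᵥ Hm *ᵥ (Dxm *ᵥ v)) - ((Dym *ᵥ u) ⬝ᵥ Hm *ᵥ (Dym *ᵥ v))
        - u ⬝ᵥ Rm *ᵥ v
        + (ewm *ᵥ u) ⬝ᵥ Hwm *ᵥ (dwm *ᵥ v) + (eem *ᵥ u) ⬝ᵥ Hem *ᵥ (dem *ᵥ v)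
        + (esm *ᵥ u) ⬝ᵥ Hsm *ᵥ (dsm *ᵥ v) + (enm *ᵥ u) ⬝ᵥ Hnm *ᵥ (dnm *ᵥ v))
    (c : ℝ)
    (Hbar : Matrix (Fin Np ⊕ Fin Nm) (Fin Np ⊕ Fin Nm) ℝ)
    (hHbar : Hbar = fromBlocks Hp 0 0 Hm)
    (L : Matrix (Fin mnp ⊕ Fin msp) (Fin Np ⊕ Fin Nm) ℝ)
    (hL : L = fromBlocks enp 0 esp (-enm))
    (hLHL : IsUnit (L * Hbar⁻¹ * Lᵀ))
    (P : Matrix (Fin Np ⊕ Fin Nm) (Fin Np ⊕ Fin Nm) ℝ)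
    (hP : P = 1 - Hbar⁻¹ * Lᵀ * (L * Hbar⁻¹ * Lᵀ)⁻¹ * L)
    (SATBC1 SATBC2 SATIC : Matrix (Fin Np ⊕ Fin Nm) (Fin Np ⊕ Fin Nm) ℝ)
    (hSATBC1 : SATBC1 = -(Hbar⁻¹ *
      (fromBlocks (ewpᵀ * Hwp * dwp) 0 0 (ewmᵀ * Hwm * dwm)
        + fromBlocks (eepᵀ * Hep * dep) 0 0 (eemᵀ * Hem * dem)
        + fromBlocks 0 0 0 (esmᵀ * Hsm * dsm))))
    (hSATIC : SATIC = -(Hbar⁻¹ *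
      fromBlocks (espᵀ * Hsp * dsp) (espᵀ * Hsp * dnm) 0 0))
    (hSATBC2 : SATBC2 = -(Hbar⁻¹ *
      (fromBlocks (ewpᵀ * Hwp * ewp) 0 0 (ewmᵀ * Hwm * ewm)
        + fromBlocks (eepᵀ * Hep * eep) 0 0 (eemᵀ * Hem * eem))))
    (D E : Matrix (Fin Np ⊕ Fin Nm) (Fin Np ⊕ Fin Nm) ℝ)
    (hD : D = (c ^ 2) • (P * (fromBlocks DLp 0 0 DLm + SATBC1 + SATIC) * P))
    (hE : E = c • (P * SATBC2 * P))
    :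
    (∀ u v : Fin Np ⊕ Fin Nm → ℝ,
      u ⬝ᵥ (Hbar * E) *ᵥ v =
        -c *
          ((ewp *ᵥ ((P *ᵥ u) ∘ Sum.inl)) ⬝ᵥ Hwp *ᵥ (ewp *ᵥ ((P *ᵥ v) ∘ Sum.inl))
          + (eep *ᵥ ((P *ᵥ u) ∘ Sum.inl)) ⬝ᵥ Hep *ᵥ (eep *ᵥ ((P *ᵥ v) ∘ Sum.inl))
          + (ewm *ᵥ ((P *ᵥ u) ∘ Sum.inr)) ⬝ᵥ Hwm *ᵥ (ewm *ᵥ ((P *ᵥ v) ∘ Sum.inr))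
          + (eem *ᵥ ((P *ᵥ u) ∘ Sum.inr)) ⬝ᵥ Hem *ᵥ (eem *ᵥ ((P *ᵥ v) ∘ Sum.inr)))) ∧
    Hbar * E = Eᵀ * Hbar ∧
    (0 ≤ c → Hwp.PosSemidef → Hep.PosSemidef → Hwm.PosSemidef → Hem.PosSemidef →
      ∀ u : Fin Np ⊕ Fin Nm → ℝ, u ⬝ᵥ Hbar *ᵥ (E *ᵥ u) ≤ 0) :=
  twoBlock_E_selfAdjoint_negSemidef_general Hp Hm hHp hHm ewp Hwp eep Hep ewm Hwm eem Hem hHwp hHep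
    hHwm hHem c Hbar hHbar L P hP SATBC2 hSATBC2 E hE
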